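/- Let V be a smooth periodic solution of the LLB equation on [0, T] over ℝ^m. Then for every t ∈ [0, T], ∫_{[0,1]^m} |V(t,x)|² dx + 2 ∫₀ᵗ ∫_{[0,1]^m} |D_x V(s,x)|² dx ds + 2λ ∫₀ᵗ ∫_{[0,1]^m} (1 + μ|V(s,x)|²)·|V(s,x)|² dx ds = ∫_{[0,1]^m} |V(0,x)|² dx, where D_x V denotes the spatial derivative (Jacobian) of V and |D_x V| its Hilbert–Schmidt norm. -/

import Mathlib

open MeasureTheory

/-- The Euclidean Laplacian in `x` of a map `u : ℝ^m → ℝ³`: the sum of the `m`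
second partial derivatives. -/
noncomputable def lap (m : ℕ) (u : (Fin m → ℝ) → (Fin 3 → ℝ)) (x : Fin m → ℝ) : Fin 3 → ℝ :=
  ∑ i : Fin m, fderiv ℝ (fun y => fderiv ℝ u y (Pi.single i 1)) x (Pi.single i 1)

/-- `V : ℝ × ℝ^m → ℝ³` is a smooth periodic solution of the Landau–Lifshitz–Bloch equation
`∂ₜV = ΔV + V × ΔV − λ(1 + μ|V|²)V` on `[0,T]` (trivial rank-3 bundle over the flat torus
`ℝ^m/ℤ^m`): `V` is smooth, `ℤ^m`-periodic in `x`, and satisfies the equation for all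
`t ∈ [0,T]` and all `x`. -/
def IsLLB (m : ℕ) (lam mu T : ℝ) (V : ℝ → (Fin m → ℝ) → (Fin 3 → ℝ)) : Prop :=
  ContDiff ℝ (⊤ : ℕ∞) (fun p : ℝ × (Fin m → ℝ) => V p.1 p.2) ∧
  (∀ (t : ℝ) (x : Fin m → ℝ) (k : Fin m → ℤ), V t (x + fun i => (k i : ℝ)) = V t x) ∧
  ∀ t ∈ Set.Icc (0 : ℝ) T, ∀ x : Fin m → ℝ,
    deriv (fun s => V s x) t =
      lap m (V t) x + crossProduct (V t x) (lap m (V t) x)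
        - (lam * (1 + mu * ∑ c, V t x c ^ 2)) • V t x

/-- Squared Hilbert–Schmidt norm `|D^i u(x)|²` of the `i`-th iterated total derivative of
`u : ℝ^m → ℝ³` at `x`: the sum of the squares of all its components. -/
noncomputable def HSsq (m i : ℕ) (u : (Fin m → ℝ) → (Fin 3 → ℝ)) (x : Fin m → ℝ) : ℝ :=
  ∑ j : Fin i → Fin m, ∑ c : Fin 3,
    (iteratedFDeriv ℝ i u x (fun r => Pi.single (j r) 1) c) ^ 2

/-- The unit cube `[0,1]^m ⊆ ℝ^m`. -/
noncomputable def cube (m : ℕ) : Set (Fin m → ℝ) := Set.Icc 0 1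

/-- Squared Sobolev norm `‖u‖²_{H^k} = ∑_{i=0}^k ∫_{[0,1]^m} |D^i u(x)|² dx`. -/
noncomputable def sobSq (m k : ℕ) (u : (Fin m → ℝ) → (Fin 3 → ℝ)) : ℝ :=
  ∑ i ∈ Finset.range (k + 1), ∫ x in cube m, HSsq m i u x

/-- The sup norm `‖u‖_∞ = sup_x |u(x)|` (Euclidean norm on `ℝ³`). -/
noncomputable def supnorm (m : ℕ) (u : (Fin m → ℝ) → (Fin 3 → ℝ)) : ℝ :=
  ⨆ x : Fin m → ℝ, Real.sqrt (∑ c, u x c ^ 2)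

-- periodic fderiv
lemma fderiv_periodic {F : Type*} [NormedAddCommGroup F] [NormedSpace ℝ F]
    {m : ℕ} (g : (Fin m → ℝ) → F) (hg : Differentiable ℝ g) (k : Fin m → ℝ)
    (hper : ∀ y, g (y + k) = g y) (x : Fin m → ℝ) :
    fderiv ℝ g (x + k) = fderiv ℝ g x := by
  have h : HasFDerivAt (fun y => g (y + k)) (fderiv ℝ g (x + k)) x := by
    have := (hg (x + k)).hasFDerivAt.comp x ((hasFDerivAt_id x).add_const k)
    exact this
  have h2 : (fun y => g (y + k)) = g := funext hper
  rw [h2] at h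
  exact h.fderiv.symm

lemma HSsq_one {m : ℕ} (u : (Fin m → ℝ) → (Fin 3 → ℝ)) (x : Fin m → ℝ) :
    HSsq m 1 u x = ∑ i : Fin m, ∑ c : Fin 3, (fderiv ℝ u x (Pi.single i 1) c) ^ 2 := by
  unfold HSsq
  rw [← Equiv.sum_comp (Equiv.funUnique (Fin 1) (Fin m)).symm]
  refine Finset.sum_congr rfl fun i _ => Finset.sum_congr rfl fun c _ => ?_
  simp [iteratedFDeriv_one_apply]

lemma insertNth_one_eq {n : ℕ} (i : Fin (n+1)) (x : Fin n → ℝ) :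
    i.insertNth (1:ℝ) x = i.insertNth 0 x + fun j => ((Pi.single i 1 : Fin (n+1) → ℤ) j : ℝ) := by
  funext j
  refine Fin.succAboveCases i ?_ ?_ j
  · simp
  · intro k
    simp [Fin.succAbove_ne i k, Pi.single_apply, (Fin.succAbove_ne i k).symm]


lemma lap_cont {m : ℕ} (u : (Fin m → ℝ) → (Fin 3 → ℝ)) (hu : ContDiff ℝ (⊤ : ℕ∞) u) :
    Continuous (lap m u) := by
  unfold lap
  refine continuous_finset_sum _ fun i _ => ?_
  have hg : ContDiff ℝ (⊤ : ℕ∞) (fun y => fderiv ℝ u y (Pi.single i 1)) :=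
    (hu.fderiv_right (by simp)).clm_apply contDiff_const
  exact (ContinuousLinearMap.apply ℝ (Fin 3 → ℝ) (Pi.single i 1)).continuous.comp
    (hg.continuous_fderiv (by simp))

open ContinuousLinearMap in
lemma ibp (m : ℕ) (hm : 1 ≤ m) (u : (Fin m → ℝ) → (Fin 3 → ℝ)) (hu : ContDiff ℝ (⊤ : ℕ∞) u)
    (hper : ∀ (x : Fin m → ℝ) (k : Fin m → ℤ), u (x + fun i => (k i : ℝ)) = u x) :
    (∫ x in cube m, ∑ c, u x c * lap m u x c)
      = - ∫ x in cube m, HSsq m 1 u x := by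
  classical
  obtain ⟨n, rfl⟩ : ∃ n, m = n + 1 := ⟨m - 1, (Nat.succ_pred_eq_of_pos hm).symm⟩
  have hud : Differentiable ℝ u := hu.differentiable (by simp)
  set g : Fin (n+1) → (Fin (n+1) → ℝ) → (Fin 3 → ℝ) := fun i y => fderiv ℝ u y (Pi.single i 1) with hg_def
  have hg : ∀ i, ContDiff ℝ (⊤ : ℕ∞) (g i) := fun i =>
    (hu.fderiv_right (by simp)).clm_apply contDiff_const
  have hgd : ∀ i, Differentiable ℝ (g i) := fun i => (hg i).differentiable (by simp)
  set A : Fin (n+1) → (Fin (n+1) → ℝ) → ((Fin (n+1) → ℝ) →L[ℝ] (Fin 3 → ℝ)) := fun i x => fderiv ℝ (g i) x with hA_def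
  set f : (Fin (n+1) → ℝ) → (Fin (n+1) → ℝ) := fun x i => ∑ c, u x c * g i x c with hf_def
  set f' : (Fin (n+1) → ℝ) → ((Fin (n+1) → ℝ) →L[ℝ] (Fin (n+1) → ℝ)) := fun x => ContinuousLinearMap.pi
    (fun i => ∑ c, (u x c • ((proj c).comp (A i x)) + (g i x c) • ((proj c).comp (fderiv ℝ u x))))
    with hf'_def
  have Hd : ∀ x, HasFDerivAt f (f' x) x := by
    intro x
    apply hasFDerivAt_pi''
    intro i
    rw [hf'_def, ContinuousLinearMap.proj_pi]
    apply HasFDerivAt.fun_sum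
    intro c _
    have h1 : HasFDerivAt (fun y => u y c) ((proj c).comp (fderiv ℝ u x)) x := by
      exact
        (ContinuousLinearMap.proj (R := ℝ) (φ := fun _ : Fin 3 => ℝ) c).hasFDerivAt.comp x
          (hud x).hasFDerivAt
    have h2 : HasFDerivAt (fun y => g i y c) ((proj c).comp (A i x)) x := by
      exact
        (ContinuousLinearMap.proj (R := ℝ) (φ := fun _ : Fin 3 => ℝ) c).hasFDerivAt.comp x
          (hgd i x).hasFDerivAt
    simpa [add_comm] using h1.fun_mul h2
  -- divergence value
  have hdiv : ∀ x, (∑ i, f' x (Pi.single i 1) i)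
      = (∑ c, u x c * lap (n+1) u x c) + HSsq (n+1) 1 u x := by
    intro x
    rw [HSsq_one]
    simp only [hf'_def, ContinuousLinearMap.pi_apply, ContinuousLinearMap.sum_apply,
      ContinuousLinearMap.add_apply, ContinuousLinearMap.smul_apply,
      ContinuousLinearMap.comp_apply, ContinuousLinearMap.proj_apply, smul_eq_mul,
      Finset.sum_add_distrib]
    congr 1
    · rw [Finset.sum_comm]
      refine Finset.sum_congr rfl fun c _ => ?_
      rw [← Finset.mul_sum]
      congr 1
      unfold lap
      rw [Finset.sum_apply]
    · refine Finset.sum_congr rfl fun i _ => Finset.sum_congr rfl fun c _ => ?_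
      show g i x c * fderiv ℝ u x (Pi.single i 1) c = _
      simp [hg_def, sq]
  -- continuity facts
  have hgc : ∀ i, Continuous (g i) := fun i => (hg i).continuous
  have hAc : ∀ i, Continuous (fun x => A i x (Pi.single i 1)) := fun i =>
    (ContinuousLinearMap.apply ℝ (Fin 3 → ℝ) (Pi.single i 1)).continuous.comp
      ((hg i).continuous_fderiv (by simp))
  have hlapc : Continuous (fun x => lap (n+1) u x) := by
    unfold lap
    exact continuous_finset_sum _ fun i _ => hAc i
  have hcont1 : Continuous (fun x => ∑ c, u x c * lap (n+1) u x c) :=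
    continuous_finset_sum _ fun c _ =>
      ((continuous_apply c).comp hu.continuous).mul ((continuous_apply c).comp hlapc)
  have hcont2 : Continuous (fun x => HSsq (n+1) 1 u x) := by
    have : ∀ i c, Continuous (fun x => (fderiv ℝ u x (Pi.single i 1) c) ^ 2) := fun i c =>
      (((continuous_apply c).comp ((hg i).continuous)).pow 2)
    simp only [funext fun x => HSsq_one u x]
    exact continuous_finset_sum _ fun i _ => continuous_finset_sum _ fun c _ => this i c
  have hfc : Continuous f := by
    apply continuous_pi
    intro i
    exact continuous_finset_sum _ fun c _ =>
      ((continuous_apply c).comp hu.continuous).mul ((continuous_apply c).comp (hgc i))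
  -- integrability
  have hIcc : IsCompact (Set.Icc (0:Fin (n+1) → ℝ) 1) := isCompact_Icc
  have hi1 : IntegrableOn (fun x => ∑ c, u x c * lap (n+1) u x c) (Set.Icc (0:Fin (n+1) → ℝ) 1) :=
    hcont1.continuousOn.integrableOn_compact hIcc
  have hi2 : IntegrableOn (fun x => HSsq (n+1) 1 u x) (Set.Icc (0:Fin (n+1) → ℝ) 1) :=
    hcont2.continuousOn.integrableOn_compact hIcc
  have hIdiv : IntegrableOn (fun x => ∑ i, f' x (Pi.single i 1) i) (Set.Icc (0:Fin (n+1) → ℝ) 1) := by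
    rw [funext hdiv]; exact hi1.add hi2
  -- divergence theorem
  have hdvt := MeasureTheory.integral_divergence_of_hasFDerivAt_off_countable
    (a := (0:Fin (n+1) → ℝ)) (b := 1) zero_le_one f f' ∅ Set.countable_empty hfc.continuousOn
    (fun x _ => Hd x) hIdiv
  rw [funext hdiv] at hdvt
  have h0 : (∫ x in Set.Icc (0:Fin (n+1) → ℝ) 1, ((∑ c, u x c * lap (n+1) u x c) + HSsq (n+1) 1 u x)) = 0 := by
    rw [hdvt]
    refine Finset.sum_eq_zero fun i _ => ?_
    rw [sub_eq_zero]
    congr 1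
    funext x
    have hfp : ∀ y : Fin (n+1) → ℝ,
        f (y + fun j => ((Pi.single i 1 : Fin (n+1) → ℤ) j : ℝ)) i = f y i := by
      intro y
      set k : Fin (n+1) → ℝ := fun j => ((Pi.single i 1 : Fin (n+1) → ℤ) j : ℝ)
      have hu' : u (y + k) = u y := hper y _
      have hg' : ∀ j, g j (y + k) = g j y := by
        intro j
        simp only [hg_def]
        rw [fderiv_periodic u hud k (fun z => hper z _)]
      simp only [hf_def, hu', hg']
    have h1 : (1:Fin (n+1) → ℝ) i = (1:ℝ) := rfl
    have h0' : (0:Fin (n+1) → ℝ) i = (0:ℝ) := rfl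
    rw [h1, h0', insertNth_one_eq i x, hfp]
  rw [integral_add hi1 hi2] at h0
  have : cube (n+1) = Set.Icc (0:Fin (n+1) → ℝ) 1 := rfl
  rw [this]
  linarith

/-- Energy identity for a smooth periodic solution `V` of the LLB equation on `[0,T]`:
`∫|V(t)|² + 2∫₀ᵗ∫|D_xV|² + 2λ∫₀ᵗ∫(1 + μ|V|²)|V|² = ∫|V(0)|²`, all spatial integrals
being over the unit cube. -/
theorem llb_energy_identity (m : ℕ) (hm : 1 ≤ m) (lam mu T : ℝ)
    (hlam : 0 < lam) (hmu : 0 < mu) (hT : 0 < T)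
    (V : ℝ → (Fin m → ℝ) → (Fin 3 → ℝ)) (hV : IsLLB m lam mu T V)
    (t : ℝ) (ht : t ∈ Set.Icc (0 : ℝ) T) :
    (∫ x in cube m, ∑ c, V t x c ^ 2)
      + 2 * (∫ s in (0 : ℝ)..t, ∫ x in cube m, HSsq m 1 (V s) x)
      + 2 * lam * (∫ s in (0 : ℝ)..t,
          ∫ x in cube m, (1 + mu * ∑ c, V s x c ^ 2) * ∑ c, V s x c ^ 2)
      = ∫ x in cube m, ∑ c, V 0 x c ^ 2 := by
  classical
  obtain ⟨hW, hper, hpde⟩ := hV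
  have ht0 : 0 ≤ t := ht.1
  have htT : t ≤ T := ht.2
  set W : ℝ × (Fin m → ℝ) → (Fin 3 → ℝ) := fun p => V p.1 p.2 with hW_def
  have hVs : ∀ s, ContDiff ℝ (⊤ : ℕ∞) (V s) := by
    intro s
    have : ContDiff ℝ (⊤ : ℕ∞) (fun x : Fin m → ℝ => W (s, x)) :=
      hW.comp (contDiff_const.prodMk contDiff_id)
    exact this
  -- time derivative
  set d : ℝ → (Fin m → ℝ) → (Fin 3 → ℝ) :=
    fun s x => fderiv ℝ W (s, x) ((1 : ℝ), (0 : Fin m → ℝ)) with hd_def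
  have hd : ∀ s x, HasDerivAt (fun s' => V s' x) (d s x) s := by
    intro s x
    have h1 : HasDerivAt (fun s' : ℝ => (s', x)) ((1 : ℝ), (0 : Fin m → ℝ)) s :=
      (hasDerivAt_id s).prodMk (hasDerivAt_const s x)
    exact (hW.differentiable (by simp) (s, x)).hasFDerivAt.comp_hasDerivAt s h1
  set Q : ℝ → (Fin m → ℝ) → ℝ := fun s x => ∑ c, V s x c ^ 2 with hQ_def
  set G : ℝ → (Fin m → ℝ) → ℝ := fun s x => ∑ c, 2 * V s x c * d s x c with hG_def
  have hQd : ∀ s x, HasDerivAt (fun s' => ∑ c, V s' x c ^ 2) (G s x) s := by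
    intro s x
    refine HasDerivAt.fun_sum fun c _ => ?_
    have hc : HasDerivAt (fun s' => V s' x c) (d s x c) s := by
      exact
        (ContinuousLinearMap.proj (R := ℝ) (φ := fun _ : Fin 3 => ℝ) c).hasFDerivAt.comp_hasDerivAt
          s (hd s x)
    simpa [pow_one, mul_comm, mul_assoc] using hc.fun_pow 2
  -- joint continuity
  have hdWc : Continuous (fun p : ℝ × (Fin m → ℝ) => fderiv ℝ W p) := hW.continuous_fderiv (by simp)
  have hdc : Continuous (fun p : ℝ × (Fin m → ℝ) => d p.1 p.2) :=
    (ContinuousLinearMap.apply ℝ (Fin 3 → ℝ) ((1 : ℝ), (0 : Fin m → ℝ))).continuous.comp hdWc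
  have hGc : Continuous (fun p : ℝ × (Fin m → ℝ) => G p.1 p.2) := by
    refine continuous_finset_sum _ fun c _ => ?_
    exact (continuous_const.mul ((continuous_apply c).comp hW.continuous)).mul
      ((continuous_apply c).comp hdc)
  have hQc : Continuous (fun p : ℝ × (Fin m → ℝ) => Q p.1 p.2) :=
    continuous_finset_sum _ fun c _ => ((continuous_apply c).comp hW.continuous).pow 2
  -- spatial partial derivatives via W
  have hsp : ∀ s x (v : Fin m → ℝ),
      fderiv ℝ (V s) x v = fderiv ℝ W (s, x) ((0 : ℝ), v) := by
    intro s x v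
    have h1 : HasFDerivAt (fun y : Fin m → ℝ => ((s : ℝ), y))
        ((0 : (Fin m → ℝ) →L[ℝ] ℝ).prod (ContinuousLinearMap.id ℝ (Fin m → ℝ))) x :=
      (hasFDerivAt_const s x).prodMk (hasFDerivAt_id x)
    have h2 := (hW.differentiable (by simp) (s, x)).hasFDerivAt.comp x h1
    have h3 : fderiv ℝ (V s) x = (fderiv ℝ W (s, x)).comp
        ((0 : (Fin m → ℝ) →L[ℝ] ℝ).prod (ContinuousLinearMap.id ℝ (Fin m → ℝ))) := h2.fderiv
    rw [h3]
    rfl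
  have hHSc : Continuous (fun p : ℝ × (Fin m → ℝ) => HSsq m 1 (V p.1) p.2) := by
    have heq : (fun p : ℝ × (Fin m → ℝ) => HSsq m 1 (V p.1) p.2)
        = fun p => ∑ i : Fin m, ∑ c : Fin 3, (fderiv ℝ W p ((0 : ℝ), Pi.single i 1) c) ^ 2 := by
      funext p
      rw [HSsq_one]
      exact Finset.sum_congr rfl fun i _ => Finset.sum_congr rfl fun c _ => by
        rw [hsp p.1 p.2 (Pi.single i 1)]
    rw [heq]
    refine continuous_finset_sum _ fun i _ => continuous_finset_sum _ fun c _ => ?_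
    exact (((continuous_apply c).comp
      ((ContinuousLinearMap.apply ℝ (Fin 3 → ℝ) ((0:ℝ), Pi.single i 1)).continuous.comp hdWc)).pow 2)
  -- PDE rewrite of G
  have hGpde : ∀ s ∈ Set.Icc (0:ℝ) T, ∀ x, G s x =
      2 * (∑ c, V s x c * lap m (V s) x c) - 2 * lam * ((1 + mu * Q s x) * Q s x) := by
    intro s hs x
    have hdd : d s x = lap m (V s) x + crossProduct (V s x) (lap m (V s) x)
        - (lam * (1 + mu * ∑ c, V s x c ^ 2)) • V s x :=
      ((hd s x).deriv).symm.trans (hpde s hs x)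
    have hcross : ∑ c, V s x c * (crossProduct (V s x) (lap m (V s) x)) c = 0 := by
      simpa only [dotProduct] using dot_self_cross (V s x) (lap m (V s) x)
    have heq : G s x = ∑ c, (2 * (V s x c * lap m (V s) x c)
        + 2 * (V s x c * (crossProduct (V s x) (lap m (V s) x)) c)
        - (2 * (lam * (1 + mu * Q s x))) * V s x c ^ 2) := by
      refine Finset.sum_congr rfl fun c _ => ?_
      rw [hdd]
      simp only [Pi.add_apply, Pi.sub_apply, Pi.smul_apply, smul_eq_mul, hQ_def]
      ring
    rw [heq, Finset.sum_sub_distrib, Finset.sum_add_distrib, ← Finset.mul_sum, ← Finset.mul_sum,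
      ← Finset.mul_sum, hcross]
    show 2 * (∑ c, V s x c * lap m (V s) x c) + 2 * 0
        - 2 * (lam * (1 + mu * Q s x)) * Q s x = _
    ring
  -- slice integral identity
  have mcube : MeasurableSet (cube m) := measurableSet_Icc
  have hccube : IsCompact (cube m) := isCompact_Icc
  have hslice : ∀ s ∈ Set.Icc (0:ℝ) T, (∫ x in cube m, G s x) =
      -2 * (∫ x in cube m, HSsq m 1 (V s) x)
        - 2 * lam * (∫ x in cube m, (1 + mu * Q s x) * Q s x) := by
    intro s hs
    have hlc : Continuous (fun x => ∑ c, V s x c * lap m (V s) x c) :=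
      continuous_finset_sum _ fun c _ => ((continuous_apply c).comp (hVs s).continuous).mul
        ((continuous_apply c).comp (lap_cont (V s) (hVs s)))
    have hqc : Continuous (fun x => (1 + mu * Q s x) * Q s x) := by
      have : Continuous (fun x => Q s x) :=
        continuous_finset_sum _ fun c _ => ((continuous_apply c).comp (hVs s).continuous).pow 2
      exact (continuous_const.add (continuous_const.mul this)).mul this
    have heq : (fun x => G s x) = fun x =>
        2 * (∑ c, V s x c * lap m (V s) x c) - 2 * lam * ((1 + mu * Q s x) * Q s x) :=
      funext (hGpde s hs)
    rw [heq, integral_sub, integral_const_mul, integral_const_mul]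
    · rw [ibp m hm (V s) (hVs s) (hper s)]
      ring
    · exact ((continuous_const.mul hlc).continuousOn).integrableOn_compact hccube
    · exact ((continuous_const.mul hqc).continuousOn).integrableOn_compact hccube
  -- FTC in time, pointwise in x
  have hftc : ∀ x, (∑ c, V t x c ^ 2) - (∑ c, V 0 x c ^ 2) = ∫ s in (0:ℝ)..t, G s x := by
    intro x
    have hGi : IntervalIntegrable (fun s => G s x) volume 0 t :=
      (hGc.comp (continuous_id.prodMk continuous_const)).intervalIntegrable 0 t
    exact (intervalIntegral.integral_eq_sub_of_hasDerivAt (fun s _ => hQd s x) hGi).symm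
  -- integrate over the cube and swap
  have hi_t : IntegrableOn (fun x => ∑ c, V t x c ^ 2) (cube m) :=
    ((continuous_finset_sum _ fun c _ => ((continuous_apply c).comp
      (hVs t).continuous).pow 2).continuousOn).integrableOn_compact hccube
  have hi_0 : IntegrableOn (fun x => ∑ c, V 0 x c ^ 2) (cube m) :=
    ((continuous_finset_sum _ fun c _ => ((continuous_apply c).comp
      (hVs 0).continuous).pow 2).continuousOn).integrableOn_compact hccube
  have key : (∫ x in cube m, ∑ c, V t x c ^ 2) - (∫ x in cube m, ∑ c, V 0 x c ^ 2)
      = ∫ x in cube m, ∫ s in (0:ℝ)..t, G s x := by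
    rw [← integral_sub hi_t hi_0]
    exact setIntegral_congr_fun mcube fun x _ => hftc x
  -- Fubini
  have hprod : Integrable (fun q : (Fin m → ℝ) × ℝ => G q.2 q.1)
      ((volume.restrict (cube m)).prod (volume.restrict (Set.Ioc (0:ℝ) t))) := by
    rw [Measure.prod_restrict]
    have hc : ContinuousOn (fun q : (Fin m → ℝ) × ℝ => G q.2 q.1)
        (cube m ×ˢ Set.Icc (0:ℝ) t) :=
      (hGc.comp (continuous_snd.prodMk continuous_fst)).continuousOn
    exact (hc.integrableOn_compact (hccube.prod isCompact_Icc)).mono_set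
      (Set.prod_mono subset_rfl Set.Ioc_subset_Icc_self)
  have hswap : (∫ x in cube m, ∫ s in (0:ℝ)..t, G s x)
      = ∫ s in Set.Ioc (0:ℝ) t, ∫ x in cube m, G s x := by
    have h1 : (fun x => ∫ s in (0:ℝ)..t, G s x)
        = fun x => ∫ s in Set.Ioc (0:ℝ) t, G s x := by
      funext x; rw [intervalIntegral.intervalIntegral_eq_integral_uIoc]
      simp [Set.uIoc_of_le ht0, ht0]
    rw [h1]
    exact MeasureTheory.integral_integral_swap hprod
  -- rewrite slices
  have hIocT : Set.Ioc (0:ℝ) t ⊆ Set.Icc (0:ℝ) T := fun s hs => ⟨le_of_lt hs.1, hs.2.trans htT⟩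
  have hslices : (∫ s in Set.Ioc (0:ℝ) t, ∫ x in cube m, G s x)
      = ∫ s in Set.Ioc (0:ℝ) t, (-2 * (∫ x in cube m, HSsq m 1 (V s) x)
          - 2 * lam * (∫ x in cube m, (1 + mu * Q s x) * Q s x)) :=
    setIntegral_congr_fun measurableSet_Ioc fun s hs => hslice s (hIocT hs)
  -- integrability of the slice functions
  have hprodA : Integrable (fun q : ℝ × (Fin m → ℝ) => HSsq m 1 (V q.1) q.2)
      ((volume.restrict (Set.Ioc (0:ℝ) t)).prod (volume.restrict (cube m))) := by
    rw [Measure.prod_restrict]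
    exact (hHSc.continuousOn.integrableOn_compact (isCompact_Icc.prod hccube)).mono_set
      (Set.prod_mono Set.Ioc_subset_Icc_self subset_rfl)
  have hprodB : Integrable (fun q : ℝ × (Fin m → ℝ) => (1 + mu * Q q.1 q.2) * Q q.1 q.2)
      ((volume.restrict (Set.Ioc (0:ℝ) t)).prod (volume.restrict (cube m))) := by
    rw [Measure.prod_restrict]
    have hc : Continuous (fun q : ℝ × (Fin m → ℝ) => (1 + mu * Q q.1 q.2) * Q q.1 q.2) :=
      (continuous_const.add (continuous_const.mul hQc)).mul hQc
    exact (hc.continuousOn.integrableOn_compact (isCompact_Icc.prod hccube)).mono_set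
      (Set.prod_mono Set.Ioc_subset_Icc_self subset_rfl)
  have hAint : IntegrableOn (fun s => ∫ x in cube m, HSsq m 1 (V s) x) (Set.Ioc (0:ℝ) t) :=
    hprodA.integral_prod_left
  have hBint : IntegrableOn (fun s => ∫ x in cube m, (1 + mu * Q s x) * Q s x)
      (Set.Ioc (0:ℝ) t) := hprodB.integral_prod_left
  have hsplit : (∫ s in Set.Ioc (0:ℝ) t, (-2 * (∫ x in cube m, HSsq m 1 (V s) x)
          - 2 * lam * (∫ x in cube m, (1 + mu * Q s x) * Q s x)))
      = -2 * (∫ s in Set.Ioc (0:ℝ) t, ∫ x in cube m, HSsq m 1 (V s) x)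
        - 2 * lam * (∫ s in Set.Ioc (0:ℝ) t, ∫ x in cube m, (1 + mu * Q s x) * Q s x) := by
    rw [integral_sub (hAint.const_mul _) (hBint.const_mul _), integral_const_mul,
      integral_const_mul]
  -- interval integrals in goal
  have hintA : (∫ s in (0:ℝ)..t, ∫ x in cube m, HSsq m 1 (V s) x)
      = ∫ s in Set.Ioc (0:ℝ) t, ∫ x in cube m, HSsq m 1 (V s) x := by
    rw [intervalIntegral.intervalIntegral_eq_integral_uIoc]; simp [Set.uIoc_of_le ht0, ht0]
  have hintB : (∫ s in (0:ℝ)..t, ∫ x in cube m, (1 + mu * ∑ c, V s x c ^ 2) * ∑ c, V s x c ^ 2)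
      = ∫ s in Set.Ioc (0:ℝ) t, ∫ x in cube m, (1 + mu * Q s x) * Q s x := by
    rw [intervalIntegral.intervalIntegral_eq_integral_uIoc]; simp [Set.uIoc_of_le ht0, ht0]; rfl
  have final := key.trans (hswap.trans (hslices.trans hsplit))
  rw [hintA, hintB]
  linarith
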